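/- arXiv:1401.4594 — 6 statements merged into one kernel-verified Lean document; each statement's English description precedes it below -/
import Mathlib

section
/- Let a hyperbolic triangle have side lengths x1, x2, x3 with opposite angles a1, a2, a3 (so that a_i faces the side of length x_i). Then 2·sin((a2+a3−a1)/2)·cosh(x1/2) = (sinh²(x2/2)+sinh²(x3/2)−sinh²(x1/2))/(sinh(x2/2)·sinh(x3/2)). -/
/-!
With `σ = (a1 + a2 + a3) / 2`, the half-angle formulas turn the cosine law into
`sinh² (x_i / 2) = cos σ cos (σ - a_i) / (sin a_j sin a_k)` and
`cosh² (x_i / 2) = cos (σ - a_j) cos (σ - a_k) / (sin a_j sin a_k)`.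
Since `a1 + a2 + a3 < π`, all these cosines are positive, so taking square roots gives
`cosh (x1 / 2) sinh (x2 / 2) sinh (x3 / 2) = cos σ cos (σ - a2) cos (σ - a3) / ∏ sin a_i`.
The claim then reduces to the identity
`sin a2 cos (σ - a2) + sin a3 cos (σ - a3) - sin a1 cos (σ - a1)
  = 2 sin (σ - a1) cos (σ - a2) cos (σ - a3)`.
-/

open Real

theorem Real.sinh_sq_half (x : ℝ) : sinh (x / 2) ^ 2 = (cosh x - 1) / 2 := by
  rw [show cosh x = cosh (2 * (x / 2)) by ring_nf, cosh_two_mul, cosh_sq]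
  ring

theorem Real.cosh_sq_half (x : ℝ) : cosh (x / 2) ^ 2 = (cosh x + 1) / 2 := by
  rw [show cosh x = cosh (2 * (x / 2)) by ring_nf, cosh_two_mul, sinh_sq]
  ring

theorem sinh_sq_half_of_cosh_eq {x a b c : ℝ} (hb : sin b ≠ 0) (hc : sin c ≠ 0)
    (h : cosh x = (cos a + cos b * cos c) / (sin b * sin c)) :
    sinh (x / 2) ^ 2 = cos ((a + b + c) / 2) * cos ((b + c - a) / 2) / (sin b * sin c) := by
  have e : cos a + cos (b + c) = 2 * cos ((a + b + c) / 2) * cos ((b + c - a) / 2) := by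
    rw [cos_add_cos, ← cos_neg ((a - (b + c)) / 2)]
    ring_nf
  rw [cos_add] at e
  rw [sinh_sq_half, h]
  field_simp
  linear_combination e

theorem cosh_sq_half_of_cosh_eq {x a b c : ℝ} (hb : sin b ≠ 0) (hc : sin c ≠ 0)
    (h : cosh x = (cos a + cos b * cos c) / (sin b * sin c)) :
    cosh (x / 2) ^ 2 = cos ((a + c - b) / 2) * cos ((a + b - c) / 2) / (sin b * sin c) := by
  have e : cos a + cos (b - c) = 2 * cos ((a + c - b) / 2) * cos ((a + b - c) / 2) := by
    rw [cos_add_cos, mul_right_comm]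
    ring_nf
  rw [cos_sub] at e
  rw [cosh_sq_half, h]
  field_simp
  linear_combination e

theorem sin_mul_cos_half_add_sin_mul_cos_half_sub_sin_mul_cos_half (a b c : ℝ) :
    sin b * cos ((a + c - b) / 2) + sin c * cos ((a + b - c) / 2) - sin a * cos ((b + c - a) / 2)
      = 2 * sin ((b + c - a) / 2) * cos ((a + c - b) / 2) * cos ((a + b - c) / 2) := by
  obtain ⟨u, v, w, rfl, rfl, rfl⟩ : ∃ u v w, a = v + w ∧ b = u + w ∧ c = u + v :=
    ⟨(b + c - a) / 2, (a + c - b) / 2, (a + b - c) / 2, by ring, by ring, by ring⟩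
  rw [show (u + w + (u + v) - (v + w)) / 2 = u by ring,
    show (v + w + (u + v) - (u + w)) / 2 = v by ring,
    show (v + w + (u + w) - (u + v)) / 2 = w by ring]
  simp only [sin_add]
  ring

theorem stmt_0_general (x1 x2 x3 a1 a2 a3 : ℝ)
    (hx2 : 0 < x2) (hx3 : 0 < x3)
    (ha1 : a1 ∈ Set.Ioo 0 π) (ha2 : a2 ∈ Set.Ioo 0 π) (ha3 : a3 ∈ Set.Ioo 0 π)
    (hsum : a1 + a2 + a3 < π)
    (h1 : Real.cosh x1 = (Real.cos a1 + Real.cos a2 * Real.cos a3) / (Real.sin a2 * Real.sin a3))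
    (h2 : Real.cosh x2 = (Real.cos a2 + Real.cos a1 * Real.cos a3) / (Real.sin a1 * Real.sin a3))
    (h3 : Real.cosh x3 = (Real.cos a3 + Real.cos a1 * Real.cos a2) / (Real.sin a1 * Real.sin a2)) :
    2 * Real.sin ((a2 + a3 - a1) / 2) * Real.cosh (x1 / 2) =
      (Real.sinh (x2 / 2) ^ 2 + Real.sinh (x3 / 2) ^ 2 - Real.sinh (x1 / 2) ^ 2)
        / (Real.sinh (x2 / 2) * Real.sinh (x3 / 2)) := by
  obtain ⟨hs1, hs2, hs3⟩ : 0 < sin a1 ∧ 0 < sin a2 ∧ 0 < sin a3 :=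
    ⟨sin_pos_of_mem_Ioo ha1, sin_pos_of_mem_Ioo ha2, sin_pos_of_mem_Ioo ha3⟩
  have ht1 := sinh_sq_half_of_cosh_eq hs2.ne' hs3.ne' h1
  have ht2 := sinh_sq_half_of_cosh_eq hs1.ne' hs3.ne' h2
  have ht3 := sinh_sq_half_of_cosh_eq hs1.ne' hs2.ne' h3
  have hc1 := cosh_sq_half_of_cosh_eq hs2.ne' hs3.ne' h1
  rw [show (a2 + a1 + a3) / 2 = (a1 + a2 + a3) / 2 by ring] at ht2
  rw [show (a3 + a1 + a2) / 2 = (a1 + a2 + a3) / 2 by ring] at ht3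
  have htrig := sin_mul_cos_half_add_sin_mul_cos_half_sub_sin_mul_cos_half a1 a2 a3
  set S := cos ((a1 + a2 + a3) / 2)
  set P1 := cos ((a2 + a3 - a1) / 2)
  set P2 := cos ((a1 + a3 - a2) / 2)
  set P3 := cos ((a1 + a2 - a3) / 2)
  have hS : 0 < S := cos_pos_of_mem_Ioo ⟨by linarith [ha1.1, ha2.1, ha3.1], by linarith⟩
  have hP2 : 0 < P2 :=
    cos_pos_of_mem_Ioo ⟨by linarith [ha1.1, ha2.2, ha3.1], by linarith [ha2.1]⟩
  have hP3 : 0 < P3 :=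
    cos_pos_of_mem_Ioo ⟨by linarith [ha1.1, ha2.1, ha3.2], by linarith [ha3.1]⟩
  have hprod : cosh (x1 / 2) * (sinh (x2 / 2) * sinh (x3 / 2)) =
      S * P2 * P3 / (sin a1 * sin a2 * sin a3) := by
    refine (pow_left_inj₀ (by positivity) (by positivity) two_ne_zero).1 ?_
    rw [mul_pow, mul_pow, hc1, ht2, ht3]
    field_simp
  rw [eq_div_iff (by positivity), mul_assoc, hprod, ht1, ht2, ht3]
  calc 2 * sin ((a2 + a3 - a1) / 2) * (S * P2 * P3 / (sin a1 * sin a2 * sin a3))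
      = S / (sin a1 * sin a2 * sin a3) * (2 * sin ((a2 + a3 - a1) / 2) * P2 * P3) := by ring
    _ = S / (sin a1 * sin a2 * sin a3) * (sin a2 * P2 + sin a3 * P3 - sin a1 * P1) := by rw [htrig]
    _ = S * P2 / (sin a1 * sin a3) + S * P3 / (sin a1 * sin a2) - S * P1 / (sin a2 * sin a3) := by
      field_simp

theorem stmt_0 (x1 x2 x3 a1 a2 a3 : ℝ)
    (hx1 : 0 < x1) (hx2 : 0 < x2) (hx3 : 0 < x3)
    (ha1 : a1 ∈ Set.Ioo 0 π) (ha2 : a2 ∈ Set.Ioo 0 π) (ha3 : a3 ∈ Set.Ioo 0 π)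
    (hsum : a1 + a2 + a3 < π)
    (h1 : Real.cosh x1 = (Real.cos a1 + Real.cos a2 * Real.cos a3) / (Real.sin a2 * Real.sin a3))
    (h2 : Real.cosh x2 = (Real.cos a2 + Real.cos a1 * Real.cos a3) / (Real.sin a1 * Real.sin a3))
    (h3 : Real.cosh x3 = (Real.cos a3 + Real.cos a1 * Real.cos a2) / (Real.sin a1 * Real.sin a2)) :
    2 * Real.sin ((a2 + a3 - a1) / 2) * Real.cosh (x1 / 2) =
      (Real.sinh (x2 / 2) ^ 2 + Real.sinh (x3 / 2) ^ 2 - Real.sinh (x1 / 2) ^ 2)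
        / (Real.sinh (x2 / 2) * Real.sinh (x3 / 2)) :=
  stmt_0_general x1 x2 x3 a1 a2 a3 hx2 hx3 ha1 ha2 ha3 hsum h1 h2 h3
end

section
/- Let a hyperbolic triangle have side lengths a, b, c with a compact circumcircle of radius r. Then (s(a)s(b)s(c))²/((s(a)+s(b)+s(c))(s(a)+s(b)−s(c))(s(b)+s(c)−s(a))(s(c)+s(a)−s(b))) = (1/4)·sinh²(r), where s(t) = sinh(t/2). In particular, the circumcircle is compact if and only if s(a), s(b), s(c) satisfy the strict triangle inequality. -/
/-!
In the upper half-plane the hyperbolic circle with center `p` and radius `r` is the Euclidean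
circle with center `q = p.re + i p.im cosh r` and radius `R = p.im sinh r`, so that
`q.im² - R² = p.im²`. For a Euclidean triangle `a b c` with squared sides `U V W`, twice the signed
area `D` and circumcenter `q` of radius `R`, Cramer's rule for `q` gives `U V W = 4 D² R²` and
`heronForm (U a.im) (V b.im) (W c.im) = 4 D² (q.im² - R²)`. Since
`|z - w|² = 4 sinh² (d(z, w) / 2) z.im w.im`, both identities are, up to the common factor
`(a.im b.im c.im)²`, identities in `s(a), s(b), s(c)`, and their quotient is Fenchel's formula.
Conversely, if the `s`-values satisfy the strict triangle inequality, the second identity forces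
`D ≠ 0` and `R < q.im`: the Euclidean circumcircle lies in the half-plane, hence is a hyperbolic
circle.
-/

open Real

/-- `16 · area²` of a triangle whose squared side lengths are `x`, `y`, `z`. -/
def heronForm (x y z : ℝ) : ℝ := 2 * (x * y + y * z + z * x) - x ^ 2 - y ^ 2 - z ^ 2

theorem heronForm_sq (x y z : ℝ) :
    heronForm (x ^ 2) (y ^ 2) (z ^ 2) = (x + y + z) * (x + y - z) * (y + z - x) * (z + x - y) := by
  unfold heronForm; ring

theorem heronForm_const_mul (k x y z : ℝ) :
    heronForm (k * x) (k * y) (k * z) = k ^ 2 * heronForm x y z := by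
  unfold heronForm; ring

theorem lt_add_of_triangle_product_pos {x y z : ℝ} (hx : 0 < x) (hy : 0 < y)
    (h : 0 < (x + y + z) * (x + y - z) * (y + z - x) * (z + x - y)) : z < x + y := by
  by_contra! hxy
  have : (x + y + z) * (x + y - z) * (y + z - x) * (z + x - y) ≤ 0 := by
    have h1 : 0 ≤ (x + y + z) * (y + z - x) * (z + x - y) := by
      apply mul_nonneg (mul_nonneg _ _) _ <;> linarith
    nlinarith
  linarith

theorem triangle_product_pos_iff {x y z : ℝ} (hx : 0 < x) (hy : 0 < y) (hz : 0 < z) :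
    0 < (x + y + z) * (x + y - z) * (y + z - x) * (z + x - y) ↔
      z < x + y ∧ x < y + z ∧ y < z + x := by
  constructor
  · intro h
    refine ⟨lt_add_of_triangle_product_pos hx hy h, lt_add_of_triangle_product_pos hy hz ?_,
      lt_add_of_triangle_product_pos hz hx ?_⟩ <;> linarith
  · rintro ⟨hxy, hyz, hzx⟩
    apply mul_pos (mul_pos (mul_pos _ _) _) _ <;> linarith

namespace Complex

def doubleArea (a b c : ℂ) : ℝ :=
  (b.re - a.re) * (c.im - a.im) - (b.im - a.im) * (c.re - a.re)

/-- The circumcenter of `a b c` is `circumcenterNumerator a b c / (2 * doubleArea a b c)`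
(Cramer's rule). -/
def circumcenterNumerator (a b c : ℂ) : ℂ :=
  ⟨(normSq b - normSq a) * (c.im - a.im) - (normSq c - normSq a) * (b.im - a.im),
    (normSq c - normSq a) * (b.re - a.re) - (normSq b - normSq a) * (c.re - a.re)⟩

theorem dist_sq_eq_re_im (z w : ℂ) : dist z w ^ 2 = (z.re - w.re) ^ 2 + (z.im - w.im) ^ 2 := by
  rw [dist_eq_re_im, sq_sqrt (by positivity)]

theorem dist_sq_mul_dist_sq_mul_dist_sq (a b c : ℂ) :
    dist b c ^ 2 * dist c a ^ 2 * dist a b ^ 2 =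
      dist ((2 * doubleArea a b c : ℝ) * a) (circumcenterNumerator a b c) ^ 2 := by
  simp only [dist_sq_eq_re_im, doubleArea, circumcenterNumerator, normSq_apply, mul_re, mul_im,
    ofReal_re, ofReal_im]
  ring

theorem heronForm_dist_sq_mul_im (a b c : ℂ) :
    heronForm (dist b c ^ 2 * a.im) (dist c a ^ 2 * b.im) (dist a b ^ 2 * c.im) =
      (circumcenterNumerator a b c).im ^ 2 -
        dist ((2 * doubleArea a b c : ℝ) * a) (circumcenterNumerator a b c) ^ 2 := by
  simp only [heronForm, dist_sq_eq_re_im, doubleArea, circumcenterNumerator, normSq_apply, mul_re,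
    mul_im, ofReal_re, ofReal_im]
  ring

variable {a b c q : ℂ} {R : ℝ}

theorem two_mul_doubleArea_mul_eq (ha : dist a q = R) (hb : dist b q = R) (hc : dist c q = R) :
    (2 * doubleArea a b c : ℝ) * q = circumcenterNumerator a b c := by
  have hb' := congrArg (· ^ 2) (hb.trans ha.symm)
  have hc' := congrArg (· ^ 2) (hc.trans ha.symm)
  simp only [dist_sq_eq_re_im] at hb' hc'
  apply Complex.ext <;>
    simp only [doubleArea, circumcenterNumerator, normSq_apply, mul_re, mul_im, ofReal_re, ofReal_im]
  · linear_combination (b.im - a.im) * hc' - (c.im - a.im) * hb'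
  · linear_combination (c.re - a.re) * hb' - (b.re - a.re) * hc'

theorem dist_sq_mul_dist_sq_mul_dist_sq_of_dist_eq (ha : dist a q = R) (hb : dist b q = R)
    (hc : dist c q = R) :
    dist b c ^ 2 * dist c a ^ 2 * dist a b ^ 2 = (2 * doubleArea a b c) ^ 2 * R ^ 2 := by
  rw [dist_sq_mul_dist_sq_mul_dist_sq, ← two_mul_doubleArea_mul_eq ha hb hc, ← ha]
  simp only [dist_sq_eq_re_im, re_ofReal_mul, im_ofReal_mul]
  ring

theorem heronForm_dist_sq_mul_im_of_dist_eq (ha : dist a q = R) (hb : dist b q = R)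
    (hc : dist c q = R) :
    heronForm (dist b c ^ 2 * a.im) (dist c a ^ 2 * b.im) (dist a b ^ 2 * c.im) =
      (2 * doubleArea a b c) ^ 2 * (q.im ^ 2 - R ^ 2) := by
  rw [heronForm_dist_sq_mul_im, ← two_mul_doubleArea_mul_eq ha hb hc, ← ha]
  simp only [dist_sq_eq_re_im, re_ofReal_mul, im_ofReal_mul]
  ring

theorem doubleArea_ne_zero_of_heronForm_pos
    (h : 0 < heronForm (dist b c ^ 2 * a.im) (dist c a ^ 2 * b.im) (dist a b ^ 2 * c.im)) :
    doubleArea a b c ≠ 0 := by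
  intro hD
  rw [heronForm_dist_sq_mul_im, hD, dist_sq_eq_re_im] at h
  simp only [mul_zero, ofReal_zero, zero_mul, zero_re, zero_im] at h
  nlinarith

theorem dist_eq_of_two_mul_doubleArea_mul_eq (hD : doubleArea a b c ≠ 0)
    (hq : (2 * doubleArea a b c : ℝ) * q = circumcenterNumerator a b c) :
    dist b q = dist a q ∧ dist c q = dist a q := by
  have hre := congrArg re hq
  have him := congrArg im hq
  simp only [re_ofReal_mul, im_ofReal_mul, circumcenterNumerator, normSq_apply] at hre him
  constructor <;> rw [← sq_eq_sq₀ dist_nonneg dist_nonneg] <;> apply mul_left_cancel₀ hD <;>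
    simp only [dist_sq_eq_re_im, doubleArea] at hre him ⊢
  · linear_combination (a.re - b.re) * hre + (a.im - b.im) * him
  · linear_combination (a.re - c.re) * hre + (a.im - c.im) * him

theorem exists_dist_eq (hD : doubleArea a b c ≠ 0) :
    ∃ q R, dist a q = R ∧ dist b q = R ∧ dist c q = R := by
  set q := circumcenterNumerator a b c / (2 * doubleArea a b c : ℝ)
  have hq : (2 * doubleArea a b c : ℝ) * q = circumcenterNumerator a b c :=
    mul_div_cancel₀ _ (by exact_mod_cast mul_ne_zero two_ne_zero hD)
  obtain ⟨hb, hc⟩ := dist_eq_of_two_mul_doubleArea_mul_eq hD hq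
  exact ⟨q, dist a q, rfl, hb, hc⟩

end Complex

namespace UpperHalfPlane

theorem dist_coe_sq (z w : ℍ) :
    dist (z : ℂ) w ^ 2 = 4 * sinh (dist z w / 2) ^ 2 * (z.im * w.im) := by
  rw [sinh_half_dist, div_pow, mul_pow, sq_sqrt (by positivity)]
  field_simp
  norm_num

theorem exists_center_eq (q : ℍ) {R : ℝ} (h0 : 0 < R) (h1 : R < q.im) :
    ∃ (p : ℍ) (r : ℝ), 0 < r ∧ p.center r = q ∧ p.im * sinh r = R := by
  have ht : R / q.im ∈ Set.Ioo 0 1 := ⟨div_pos h0 q.im_pos, (div_lt_one q.im_pos).2 h1⟩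
  set r := artanh (R / q.im)
  have hcosh : 0 < cosh r := cosh_pos r
  refine ⟨⟨⟨q.re, q.im / cosh r⟩, div_pos q.im_pos hcosh⟩, r, artanh_pos ht, ?_, ?_⟩
  · apply ext_re_im <;> simp [hcosh.ne']
  · change q.im / cosh r * sinh r = R
    rw [div_mul_eq_mul_div, mul_div_assoc, ← tanh_eq_sinh_div_cosh,
      tanh_artanh ⟨by linarith [ht.1], ht.2⟩, mul_div_cancel₀ _ q.im_ne_zero]

theorem heronForm_dist_coe_sq_mul_im (A B C : ℍ) :
    heronForm (dist (B : ℂ) C ^ 2 * A.im) (dist (C : ℂ) A ^ 2 * B.im) (dist (A : ℂ) B ^ 2 * C.im) =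
      (4 * (A.im * B.im * C.im)) ^ 2 *
        heronForm (sinh (dist B C / 2) ^ 2) (sinh (dist C A / 2) ^ 2) (sinh (dist A B / 2) ^ 2) := by
  rw [dist_coe_sq, dist_coe_sq, dist_coe_sq, ← heronForm_const_mul]
  congr 1 <;> ring

variable {A B C p : ℍ} {r : ℝ}

theorem heronForm_mul_sinh_sq_of_dist_eq (hA : dist p A = r) (hB : dist p B = r)
    (hC : dist p C = r) :
    heronForm (sinh (dist B C / 2) ^ 2) (sinh (dist C A / 2) ^ 2) (sinh (dist A B / 2) ^ 2) *
        sinh r ^ 2 =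
      4 * (sinh (dist B C / 2) * sinh (dist C A / 2) * sinh (dist A B / 2)) ^ 2 := by
  rw [dist_comm, dist_eq_iff_dist_coe_center_eq] at hA hB hC
  have hprod := Complex.dist_sq_mul_dist_sq_mul_dist_sq_of_dist_eq hA hB hC
  have hheron := Complex.heronForm_dist_sq_mul_im_of_dist_eq hA hB hC
  rw [dist_coe_sq, dist_coe_sq, dist_coe_sq] at hprod
  simp only [coe_im, center_im] at hheron
  rw [heronForm_dist_coe_sq_mul_im] at hheron
  have hP : (4 * (A.im * B.im * C.im)) ^ 2 ≠ 0 := by positivity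
  apply mul_left_cancel₀ hP
  linear_combination sinh r ^ 2 * hheron - hprod
    + (2 * Complex.doubleArea A B C) ^ 2 * p.im ^ 2 * sinh r ^ 2 * cosh_sq_sub_sinh_sq r

theorem heronForm_pos_of_dist_eq (hAB : A ≠ B) (hBC : B ≠ C) (hCA : C ≠ A) (hA : dist p A = r)
    (hB : dist p B = r) (hC : dist p C = r) :
    0 < heronForm (sinh (dist B C / 2) ^ 2) (sinh (dist C A / 2) ^ 2) (sinh (dist A B / 2) ^ 2) := by
  have hsinh {z w : ℍ} (h : z ≠ w) : sinh (dist z w / 2) ≠ 0 :=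
    (sinh_pos_iff.2 (half_pos (dist_pos.2 h))).ne'
  have hprod : 0 < 4 * (sinh (dist B C / 2) * sinh (dist C A / 2) * sinh (dist A B / 2)) ^ 2 := by
    have := hsinh hAB; have := hsinh hBC; have := hsinh hCA
    positivity
  rw [← heronForm_mul_sinh_sq_of_dist_eq hA hB hC] at hprod
  exact pos_of_mul_pos_left hprod (sq_nonneg _)

theorem exists_dist_eq_of_heronForm_pos (hAB : A ≠ B)
    (h : 0 < heronForm (sinh (dist B C / 2) ^ 2) (sinh (dist C A / 2) ^ 2)
      (sinh (dist A B / 2) ^ 2)) :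
    ∃ (p : ℍ) (r : ℝ), 0 < r ∧ dist p A = r ∧ dist p B = r ∧ dist p C = r := by
  have hH : 0 < heronForm (dist (B : ℂ) C ^ 2 * (A : ℂ).im) (dist (C : ℂ) A ^ 2 * (B : ℂ).im)
      (dist (A : ℂ) B ^ 2 * (C : ℂ).im) := by
    simp only [coe_im]
    rw [heronForm_dist_coe_sq_mul_im]
    positivity
  obtain ⟨q, R, hA, hB, hC⟩ :=
    Complex.exists_dist_eq (Complex.doubleArea_ne_zero_of_heronForm_pos hH)
  have hRq : R ^ 2 < q.im ^ 2 := by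
    rw [Complex.heronForm_dist_sq_mul_im_of_dist_eq hA hB hC] at hH
    exact sub_pos.1 (pos_of_mul_pos_right hH (sq_nonneg _))
  have hR : 0 < R := by
    rw [← hA]
    refine dist_pos.2 fun hAq => hAB (UpperHalfPlane.ext ?_)
    rw [hAq, eq_comm, ← dist_eq_zero, hB, ← hA, hAq, dist_self]
  have hAq := Complex.dist_sq_eq_re_im A q
  rw [hA, coe_re, coe_im] at hAq
  -- `A` lies on the circle above the real axis and `R < |q.im|`, so `q` is above it too.
  have hq : 0 < q.im := by nlinarith [A.im_pos, sq_nonneg (A.re - q.re)]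
  obtain ⟨p, r, hr, hcenter, hsinh⟩ := exists_center_eq ⟨q, hq⟩ hR (show R < q.im by nlinarith)
  refine ⟨p, r, hr, ?_, ?_, ?_⟩ <;>
    rwa [dist_comm, dist_eq_iff_dist_coe_center_eq, hcenter, hsinh]

end UpperHalfPlane

/-- Fenchel's formula for the circumradius of a hyperbolic triangle, stated in the
upper half-plane model of the hyperbolic plane. A compact circumcircle through the
vertices `A, B, C` is witnessed by a center `p` with `dist p A = dist p B = dist p C = r`. -/
theorem stmt_10 (A B C : UpperHalfPlane) (hAB : A ≠ B) (hBC : B ≠ C) (hCA : C ≠ A)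
    (a b c : ℝ) (ha : a = dist B C) (hb : b = dist C A) (hc : c = dist A B) :
    (∀ (p : UpperHalfPlane) (r : ℝ), 0 < r →
        dist p A = r → dist p B = r → dist p C = r →
        (Real.sinh (a / 2) * Real.sinh (b / 2) * Real.sinh (c / 2)) ^ 2 /
            ((Real.sinh (a / 2) + Real.sinh (b / 2) + Real.sinh (c / 2)) *
              (Real.sinh (a / 2) + Real.sinh (b / 2) - Real.sinh (c / 2)) *
              (Real.sinh (b / 2) + Real.sinh (c / 2) - Real.sinh (a / 2)) *
              (Real.sinh (c / 2) + Real.sinh (a / 2) - Real.sinh (b / 2))) =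
          (1 / 4) * Real.sinh r ^ 2) ∧
    ((∃ (p : UpperHalfPlane) (r : ℝ), 0 < r ∧
          dist p A = r ∧ dist p B = r ∧ dist p C = r) ↔
        (Real.sinh (a / 2) + Real.sinh (b / 2) > Real.sinh (c / 2) ∧
          Real.sinh (b / 2) + Real.sinh (c / 2) > Real.sinh (a / 2) ∧
          Real.sinh (c / 2) + Real.sinh (a / 2) > Real.sinh (b / 2))) := by
  subst ha hb hc
  have hsinh {z w : UpperHalfPlane} (h : z ≠ w) : 0 < sinh (dist z w / 2) :=
    sinh_pos_iff.2 (half_pos (dist_pos.2 h))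
  rw [← triangle_product_pos_iff (hsinh hBC) (hsinh hCA) (hsinh hAB), ← heronForm_sq]
  refine ⟨fun p r _ hpA hpB hpC => ?_, ?_⟩
  · have hfenchel := UpperHalfPlane.heronForm_mul_sinh_sq_of_dist_eq hpA hpB hpC
    have hpos := UpperHalfPlane.heronForm_pos_of_dist_eq hAB hBC hCA hpA hpB hpC
    rw [div_eq_iff hpos.ne']
    linear_combination -hfenchel / 4
  · constructor
    · rintro ⟨p, r, -, hpA, hpB, hpC⟩
      exact UpperHalfPlane.heronForm_pos_of_dist_eq hAB hBC hCA hpA hpB hpC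
    · exact UpperHalfPlane.exists_dist_eq_of_heronForm_pos hAB
end

section
/- Let a hyperbolic triangle have side lengths a, b, c with opposite angles α, β, γ, and a compact circumcircle of radius r. Then sinh(a)/sin(α) = 2·tanh(r)·cosh(a/2)·cosh(b/2)·cosh(c/2). -/
/-!
With `x, y, z` the half-side sines `sinh (a/2), sinh (b/2), sinh (c/2)` and `G` the determinant
of the matrix `(cosh dᵢⱼ)` of the vertices, the cosine law gives `sin α · sinh b · sinh c = √G`,
so `sinh a / sin α = sinh a sinh b sinh c / √G = 8xyz · cosh (a/2) cosh (b/2) cosh (c/2) / √G`.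
In half-side terms `G = 4 (H + 4 (xyz)²)` with `H` the Heron-type product of Fenchel's formula,
which reads `sinh² r · H = 4 (xyz)²`; hence `G = 4 H cosh² r` and `tanh r · √G = 4xyz`.
-/

open Real

noncomputable def coshGramDet (a b c : ℝ) : ℝ :=
  1 - cosh a ^ 2 - cosh b ^ 2 - cosh c ^ 2 + 2 * cosh a * cosh b * cosh c

def heronProduct (x y z : ℝ) : ℝ :=
  (x + y + z) * (x + y - z) * (y + z - x) * (z + x - y)

lemma cosh_eq_one_add_two_mul_sinh_half_sq (x : ℝ) : cosh x = 1 + 2 * sinh (x / 2) ^ 2 := by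
  conv_lhs => rw [← mul_div_cancel₀ x two_ne_zero, cosh_two_mul, cosh_sq]
  ring

lemma sinh_eq_two_mul_sinh_half_mul_cosh_half (x : ℝ) :
    sinh x = 2 * sinh (x / 2) * cosh (x / 2) := by
  rw [← sinh_two_mul, mul_div_cancel₀ x two_ne_zero]

lemma coshGramDet_eq_heronProduct (a b c : ℝ) :
    coshGramDet a b c = 4 * (heronProduct (sinh (a / 2)) (sinh (b / 2)) (sinh (c / 2)) +
      4 * (sinh (a / 2) * sinh (b / 2) * sinh (c / 2)) ^ 2) := by
  rw [coshGramDet, heronProduct, cosh_eq_one_add_two_mul_sinh_half_sq a,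
    cosh_eq_one_add_two_mul_sinh_half_sq b, cosh_eq_one_add_two_mul_sinh_half_sq c]
  ring

lemma sin_mul_sinh_mul_sinh_eq_sqrt_coshGramDet {α a b c : ℝ} (hb : 0 < b) (hc : 0 < c)
    (hα : 0 ≤ sin α) (hcos : cos α = (-cosh a + cosh b * cosh c) / (sinh b * sinh c)) :
    sin α * (sinh b * sinh c) = √(coshGramDet a b c) := by
  have hbc : 0 < sinh b * sinh c := mul_pos (sinh_pos_iff.mpr hb) (sinh_pos_iff.mpr hc)
  rw [eq_div_iff hbc.ne'] at hcos
  have hG : coshGramDet a b c = (sin α * (sinh b * sinh c)) ^ 2 := by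
    rw [coshGramDet]
    linear_combination -(sinh b * sinh c) ^ 2 * sin_sq_add_cos_sq α
      + (cos α * (sinh b * sinh c) - cosh a + cosh b * cosh c) * hcos
      + (cosh c ^ 2 - 1) * cosh_sq b + sinh b ^ 2 * cosh_sq c
  rw [hG, sqrt_sq (by positivity)]

lemma tanh_mul_sqrt_coshGramDet {a b c r : ℝ} (ha : 0 < a) (hb : 0 < b) (hc : 0 < c)
    (hr : 0 < r)
    (hFenchel : (sinh (a / 2) * sinh (b / 2) * sinh (c / 2)) ^ 2 /
        heronProduct (sinh (a / 2)) (sinh (b / 2)) (sinh (c / 2)) = (1 / 4) * sinh r ^ 2) :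
    tanh r * √(coshGramDet a b c) = 4 * (sinh (a / 2) * sinh (b / 2) * sinh (c / 2)) := by
  rw [coshGramDet_eq_heronProduct]
  set p := sinh (a / 2) * sinh (b / 2) * sinh (c / 2)
  set H := heronProduct (sinh (a / 2)) (sinh (b / 2)) (sinh (c / 2))
  have hp : 0 < p := by
    have := sinh_pos_iff.mpr (half_pos ha)
    have := sinh_pos_iff.mpr (half_pos hb)
    have := sinh_pos_iff.mpr (half_pos hc)
    positivity
  have hsinh : 0 < sinh r := sinh_pos_iff.mpr hr
  have hH : 0 < H := by
    have : 0 < p ^ 2 / H := hFenchel ▸ by positivity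
    exact (div_pos_iff_of_pos_left (by positivity)).mp this
  rw [div_eq_iff hH.ne'] at hFenchel
  have hG : 4 * (H + 4 * p ^ 2) = (2 * cosh r * √H) ^ 2 := by
    rw [mul_pow (2 * cosh r), sq_sqrt hH.le]
    linear_combination 16 * hFenchel - 4 * H * cosh_sq r
  have hsinh_mul : sinh r * √H = 2 * p := by
    rw [← pow_left_inj₀ (by positivity) (by positivity) two_ne_zero, mul_pow (sinh r),
      sq_sqrt hH.le]
    linear_combination -4 * hFenchel
  rw [hG, sqrt_sq (by positivity), tanh_eq_sinh_div_cosh]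
  field_simp
  linear_combination 2 * hsinh_mul

theorem stmt_11_general (a b c α r : ℝ)
    (ha : 0 < a) (hb : 0 < b) (hc : 0 < c) (hr : 0 < r)
    (hα : α ∈ Set.Ioo 0 π)
    (hcosα : Real.cos α = (-Real.cosh a + Real.cosh b * Real.cosh c) /
        (Real.sinh b * Real.sinh c))
    (hFenchel : (Real.sinh (a / 2) * Real.sinh (b / 2) * Real.sinh (c / 2)) ^ 2 /
        ((Real.sinh (a / 2) + Real.sinh (b / 2) + Real.sinh (c / 2)) *
          (Real.sinh (a / 2) + Real.sinh (b / 2) - Real.sinh (c / 2)) *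
          (Real.sinh (b / 2) + Real.sinh (c / 2) - Real.sinh (a / 2)) *
          (Real.sinh (c / 2) + Real.sinh (a / 2) - Real.sinh (b / 2))) =
        (1 / 4) * Real.sinh r ^ 2) :
    Real.sinh a / Real.sin α =
      2 * Real.tanh r * Real.cosh (a / 2) * Real.cosh (b / 2) * Real.cosh (c / 2) := by
  have hsin : 0 < sin α := sin_pos_of_pos_of_lt_pi hα.1 hα.2
  have hbc : 0 < sinh b * sinh c := mul_pos (sinh_pos_iff.mpr hb) (sinh_pos_iff.mpr hc)
  have hsqrt := sin_mul_sinh_mul_sinh_eq_sqrt_coshGramDet hb hc hsin.le hcosα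
  have htanh := tanh_mul_sqrt_coshGramDet ha hb hc hr hFenchel
  have hG : 0 < √(coshGramDet a b c) := hsqrt ▸ mul_pos hsin hbc
  calc sinh a / sin α = sinh a * sinh b * sinh c / √(coshGramDet a b c) := by
        rw [← hsqrt]
        field_simp
    _ = 2 * (tanh r * √(coshGramDet a b c)) * cosh (a / 2) * cosh (b / 2) * cosh (c / 2) /
          √(coshGramDet a b c) := by
        rw [htanh, sinh_eq_two_mul_sinh_half_mul_cosh_half a,
          sinh_eq_two_mul_sinh_half_mul_cosh_half b, sinh_eq_two_mul_sinh_half_mul_cosh_half c]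
        ring
    _ = 2 * tanh r * cosh (a / 2) * cosh (b / 2) * cosh (c / 2) := by
        field_simp

/-- Hyperbolic "law of sines" with the circumradius factor. The triangle is given by
its side lengths and angles via the hyperbolic cosine law, and the circumradius `r`
is characterized by Fenchel's formula. -/
theorem stmt_11 (a b c α β γ r : ℝ)
    (ha : 0 < a) (hb : 0 < b) (hc : 0 < c) (hr : 0 < r)
    (hα : α ∈ Set.Ioo 0 π) (hβ : β ∈ Set.Ioo 0 π) (hγ : γ ∈ Set.Ioo 0 π)
    (hsum : α + β + γ < π)
    (hcosα : Real.cos α = (-Real.cosh a + Real.cosh b * Real.cosh c) /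
        (Real.sinh b * Real.sinh c))
    (hcosβ : Real.cos β = (-Real.cosh b + Real.cosh c * Real.cosh a) /
        (Real.sinh c * Real.sinh a))
    (hcosγ : Real.cos γ = (-Real.cosh c + Real.cosh a * Real.cosh b) /
        (Real.sinh a * Real.sinh b))
    (hFenchel : (Real.sinh (a / 2) * Real.sinh (b / 2) * Real.sinh (c / 2)) ^ 2 /
        ((Real.sinh (a / 2) + Real.sinh (b / 2) + Real.sinh (c / 2)) *
          (Real.sinh (a / 2) + Real.sinh (b / 2) - Real.sinh (c / 2)) *
          (Real.sinh (b / 2) + Real.sinh (c / 2) - Real.sinh (a / 2)) *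
          (Real.sinh (c / 2) + Real.sinh (a / 2) - Real.sinh (b / 2))) =
        (1 / 4) * Real.sinh r ^ 2) :
    Real.sinh a / Real.sin α =
      2 * Real.tanh r * Real.cosh (a / 2) * Real.cosh (b / 2) * Real.cosh (c / 2) :=
  stmt_11_general a b c α r ha hb hc hr hα hcosα hFenchel
end

section
/- Suppose positive real sequences l₁⁽ᵐ⁾, l₂⁽ᵐ⁾, l₃⁽ᵐ⁾ satisfy sinh(l_i⁽ᵐ⁾/2) = sinh(a_i/2)·exp(u_j⁽ᵐ⁾ + u_k⁽ᵐ⁾) for fixed constants a₁, a₂, a₃ > 0 and {i,j,k} = {1,2,3}, and each triple l₁⁽ᵐ⁾, l₂⁽ᵐ⁾, l₃⁽ᵐ⁾ forms a hyperbolic triangle (satisfies the triangle inequality). Then it is impossible that lim_m u₂⁽ᵐ⁾ and lim_m u₃⁽ᵐ⁾ both exist in (−∞, ∞] while lim_m u₁⁽ᵐ⁾ = −∞. -/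
/-!
For `x, y ≥ 0` one has `cosh ≤ 1 + sinh`, so `sinh (x + y) ≤ sinh x + sinh y + 2 sinh x sinh y`.
Applied to the triangle inequality `l₁ < l₂ + l₃` and divided by `e^{u₂ + u₃}`, the discrete
conformal relations give
`sinh (a₁/2) < sinh (a₂/2) e^{u₁ - u₂} + sinh (a₃/2) e^{u₁ - u₃} + 2 sinh (a₂/2) sinh (a₃/2) e^{2 u₁}`
for every `m`. If `u₁ → -∞` while `u₂, u₃` stay bounded below, the right-hand side tends to `0`,
contradicting `sinh (a₁/2) > 0`.
-/

open Filter Topology Real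

theorem Real.cosh_le_one_add_sinh {y : ℝ} (hy : 0 ≤ y) : cosh y ≤ 1 + sinh y := by
  have hexp : exp (-y) ≤ 1 := exp_le_one_iff.mpr (by linarith)
  linarith [cosh_sub_sinh y]

theorem Real.sinh_add_le {x y : ℝ} (hx : 0 ≤ x) (hy : 0 ≤ y) :
    sinh (x + y) ≤ sinh x + sinh y + 2 * sinh x * sinh y := by
  rw [sinh_add]
  linarith [mul_le_mul_of_nonneg_left (cosh_le_one_add_sinh hy) (sinh_nonneg_iff.mpr hx),
    mul_le_mul_of_nonneg_right (cosh_le_one_add_sinh hx) (sinh_nonneg_iff.mpr hy)]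

theorem Real.sinh_half_lt_of_lt_add {l₁ l₂ l₃ : ℝ} (hl₂ : 0 ≤ l₂) (hl₃ : 0 ≤ l₃)
    (h : l₁ < l₂ + l₃) :
    sinh (l₁ / 2) < sinh (l₂ / 2) + sinh (l₃ / 2) + 2 * sinh (l₂ / 2) * sinh (l₃ / 2) :=
  calc sinh (l₁ / 2) < sinh (l₂ / 2 + l₃ / 2) := sinh_lt_sinh.mpr (by linarith)
    _ ≤ _ := sinh_add_le (by linarith) (by linarith)

theorem sinh_half_lt_of_conformal_lt_add {a₁ a₂ a₃ l₁ l₂ l₃ u₁ u₂ u₃ : ℝ}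
    (hl₂ : 0 ≤ l₂) (hl₃ : 0 ≤ l₃)
    (h₁ : sinh (l₁ / 2) = sinh (a₁ / 2) * exp (u₂ + u₃))
    (h₂ : sinh (l₂ / 2) = sinh (a₂ / 2) * exp (u₁ + u₃))
    (h₃ : sinh (l₃ / 2) = sinh (a₃ / 2) * exp (u₁ + u₂))
    (h : l₁ < l₂ + l₃) :
    sinh (a₁ / 2) < sinh (a₂ / 2) * exp (u₁ - u₂) + sinh (a₃ / 2) * exp (u₁ - u₃)
      + 2 * sinh (a₂ / 2) * sinh (a₃ / 2) * exp (u₁ + u₁) := by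
  have key := sinh_half_lt_of_lt_add hl₂ hl₃ h
  rw [h₁, h₂, h₃] at key
  refine lt_of_mul_lt_mul_right (key.trans_eq ?_) (exp_pos (u₂ + u₃)).le
  rw [exp_sub, exp_sub, exp_add, exp_add, exp_add, exp_add]
  field_simp

theorem tendsto_sub_atBot_of_atBot_of_nhds_or_atTop {ι : Type*} {l : Filter ι} {u v : ι → ℝ}
    (hu : Tendsto u l atBot) (hv : (∃ L, Tendsto v l (𝓝 L)) ∨ Tendsto v l atTop) :
    Tendsto (fun i => u i - v i) l atBot := by
  obtain ⟨b, hb⟩ : ∃ b, ∀ᶠ i in l, b ≤ v i := by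
    rcases hv with ⟨L, hL⟩ | hv
    · exact ⟨L - 1, hL.eventually (eventually_ge_nhds (by linarith))⟩
    · exact ⟨0, hv.eventually_ge_atTop 0⟩
  simpa only [sub_eq_add_neg] using
    tendsto_atBot_add_right_of_ge' l (-b) hu (hb.mono fun i hi => neg_le_neg hi)

theorem stmt_16_general (a1 a2 a3 : ℝ) (ha1 : 0 < a1)
    (l1 l2 l3 u1 u2 u3 : ℕ → ℝ)
    (hl2 : ∀ m, 0 < l2 m) (hl3 : ∀ m, 0 < l3 m)
    (h1 : ∀ m, Real.sinh (l1 m / 2) = Real.sinh (a1 / 2) * Real.exp (u2 m + u3 m))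
    (h2 : ∀ m, Real.sinh (l2 m / 2) = Real.sinh (a2 / 2) * Real.exp (u1 m + u3 m))
    (h3 : ∀ m, Real.sinh (l3 m / 2) = Real.sinh (a3 / 2) * Real.exp (u1 m + u2 m))
    (htri : ∀ m, l1 m < l2 m + l3 m ∧ l2 m < l1 m + l3 m ∧ l3 m < l1 m + l2 m)
    (hu1 : Tendsto u1 atTop atBot)
    (hu2 : (∃ L : ℝ, Tendsto u2 atTop (𝓝 L)) ∨ Tendsto u2 atTop atTop)
    (hu3 : (∃ L : ℝ, Tendsto u3 atTop (𝓝 L)) ∨ Tendsto u3 atTop atTop) :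
    False := by
  have hexp {v : ℕ → ℝ} (hv : Tendsto v atTop atBot) :
      Tendsto (fun m => exp (v m)) atTop (𝓝 0) :=
    tendsto_exp_atBot.comp hv
  have hlim : Tendsto (fun m => sinh (a2 / 2) * exp (u1 m - u2 m)
      + sinh (a3 / 2) * exp (u1 m - u3 m) + 2 * sinh (a2 / 2) * sinh (a3 / 2) * exp (u1 m + u1 m))
      atTop (𝓝 0) := by
    simpa using
      (((hexp (tendsto_sub_atBot_of_atBot_of_nhds_or_atTop hu1 hu2)).const_mul (sinh (a2 / 2))).add
        ((hexp (tendsto_sub_atBot_of_atBot_of_nhds_or_atTop hu1 hu3)).const_mul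
          (sinh (a3 / 2)))).add
        ((hexp (hu1.atBot_add_atBot hu1)).const_mul (2 * sinh (a2 / 2) * sinh (a3 / 2)))
  have hc1 : 0 < sinh (a1 / 2) := sinh_pos_iff.mpr (by linarith)
  obtain ⟨m, hm⟩ := (hlim.eventually (eventually_lt_nhds hc1)).exists
  exact hm.not_gt <| sinh_half_lt_of_conformal_lt_add (hl2 m).le (hl3 m).le (h1 m) (h2 m) (h3 m)
    (htri m).1

theorem stmt_16 (a1 a2 a3 : ℝ) (ha1 : 0 < a1) (ha2 : 0 < a2) (ha3 : 0 < a3)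
    (l1 l2 l3 u1 u2 u3 : ℕ → ℝ)
    (hl1 : ∀ m, 0 < l1 m) (hl2 : ∀ m, 0 < l2 m) (hl3 : ∀ m, 0 < l3 m)
    (h1 : ∀ m, Real.sinh (l1 m / 2) = Real.sinh (a1 / 2) * Real.exp (u2 m + u3 m))
    (h2 : ∀ m, Real.sinh (l2 m / 2) = Real.sinh (a2 / 2) * Real.exp (u1 m + u3 m))
    (h3 : ∀ m, Real.sinh (l3 m / 2) = Real.sinh (a3 / 2) * Real.exp (u1 m + u2 m))
    (htri : ∀ m, l1 m < l2 m + l3 m ∧ l2 m < l1 m + l3 m ∧ l3 m < l1 m + l2 m)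
    (hu1 : Tendsto u1 atTop atBot)
    (hu2 : (∃ L : ℝ, Tendsto u2 atTop (𝓝 L)) ∨ Tendsto u2 atTop atTop)
    (hu3 : (∃ L : ℝ, Tendsto u3 atTop (𝓝 L)) ∨ Tendsto u3 atTop atTop) :
    False :=
  stmt_16_general a1 a2 a3 ha1 l1 l2 l3 u1 u2 u3 hl2 hl3 h1 h2 h3 htri hu1 hu2 hu3
end

section
/- Let l_i⁽ᵐ⁾ (i=1,2,3) be side lengths of hyperbolic triangles with sinh(l_i⁽ᵐ⁾/2) = sinh(a_i/2)·exp(u_j⁽ᵐ⁾+u_k⁽ᵐ⁾) for fixed a_i > 0, where u_i⁽ᵐ⁾ → ∞ for all i = 1,2,3 (so all l_j⁽ᵐ⁾ → ∞). Let α_i⁽ᵐ⁾ be the angle opposite l_i⁽ᵐ⁾. Then cos(α_i⁽ᵐ⁾) → 1, i.e., all three angles tend to 0. -/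
/-!
Write `sᵢ = sinh (lᵢ / 2)`. Since `cosh l₂ cosh l₃ = cosh (l₂ - l₃) + sinh l₂ sinh l₃`,
`cosh l₁ = 1 + 2 s₁²` and `sinh l ≥ 2 sinh (l / 2)²` for `l ≥ 0`, the cosine law gives
`1 - (s₁ / (s₂ s₃))² / 2 ≤ cos α₁ ≤ 1`. The hypotheses make `s₁ / (s₂ s₃)` a constant multiple
of `exp (-2 u₁)`, which tends to `0`; hence `cos α₁ → 1` and `α₁ = arccos (cos α₁) → 0`.
-/

open Filter Topology Real

namespace Real

lemma cosh_eq_two_mul_sinh_half_sq_add_one (x : ℝ) : cosh x = 2 * sinh (x / 2) ^ 2 + 1 := by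
  conv_lhs => rw [← add_halves x, cosh_add, ← sq, ← sq, cosh_sq]
  ring

lemma two_mul_sinh_half_sq_le_sinh {x : ℝ} (hx : 0 ≤ x) : 2 * sinh (x / 2) ^ 2 ≤ sinh x := by
  have hs : 0 ≤ sinh (x / 2) := sinh_nonneg_iff.2 (by linarith)
  calc 2 * sinh (x / 2) ^ 2 ≤ 2 * sinh (x / 2) * cosh (x / 2) := by
        rw [sq, ← mul_assoc]; gcongr; exact (sinh_lt_cosh _).le
    _ = sinh x := by rw [← sinh_two_mul, mul_div_cancel₀ x two_ne_zero]

end Real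

lemma one_sub_sq_div_two_le_hyperbolic_cos {x y z : ℝ} (hy : 0 < y) (hz : 0 < z) :
    1 - (sinh (x / 2) / (sinh (y / 2) * sinh (z / 2))) ^ 2 / 2 ≤
      (-cosh x + cosh y * cosh z) / (sinh y * sinh z) := by
  have hsy : 0 < sinh (y / 2) := sinh_pos_iff.2 (by linarith)
  have hsz : 0 < sinh (z / 2) := sinh_pos_iff.2 (by linarith)
  have hsinh : 4 * (sinh (y / 2) ^ 2 * sinh (z / 2) ^ 2) ≤ sinh y * sinh z := by
    rw [show (4 : ℝ) * (sinh (y / 2) ^ 2 * sinh (z / 2) ^ 2) =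
      (2 * sinh (y / 2) ^ 2) * (2 * sinh (z / 2) ^ 2) by ring]
    gcongr
    exacts [two_mul_sinh_half_sq_le_sinh hy.le, two_mul_sinh_half_sq_le_sinh hz.le]
  have hD : 0 < sinh y * sinh z := by positivity
  calc 1 - (sinh (x / 2) / (sinh (y / 2) * sinh (z / 2))) ^ 2 / 2
      = 1 - 2 * sinh (x / 2) ^ 2 / (4 * (sinh (y / 2) ^ 2 * sinh (z / 2) ^ 2)) := by
        rw [div_pow, mul_pow]; ring
    _ ≤ 1 - 2 * sinh (x / 2) ^ 2 / (sinh y * sinh z) := by gcongr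
    _ ≤ 1 + (cosh (y - z) - cosh x) / (sinh y * sinh z) := by
        rw [sub_eq_add_neg, ← neg_div, cosh_eq_two_mul_sinh_half_sq_add_one x]
        gcongr
        linarith [one_le_cosh (y - z)]
    _ = (-cosh x + cosh y * cosh z) / (sinh y * sinh z) := by
        rw [cosh_sub]; field_simp; ring

lemma tendsto_div_mul_of_eq_mul_exp {ι : Type*} {l : Filter ι} {s₁ s₂ s₃ p q r : ι → ℝ}
    (k₁ k₂ k₃ : ℝ) (h₁ : ∀ i, s₁ i = k₁ * exp (p i)) (h₂ : ∀ i, s₂ i = k₂ * exp (q i))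
    (h₃ : ∀ i, s₃ i = k₃ * exp (r i)) (h : Tendsto (fun i => q i + r i - p i) l atTop) :
    Tendsto (fun i => s₁ i / (s₂ i * s₃ i)) l (𝓝 0) := by
  have heq : ∀ i, s₁ i / (s₂ i * s₃ i) = k₁ / (k₂ * k₃) * exp (-(q i + r i - p i)) := by
    intro i
    rw [h₁, h₂, h₃, mul_mul_mul_comm, mul_div_mul_comm, ← exp_add, ← exp_sub]
    ring_nf
  simpa [heq] using (tendsto_exp_neg_atTop_nhds_zero.comp h).const_mul (k₁ / (k₂ * k₃))

lemma tendsto_cos_nhds_one_of_hyperbolic_cos {ι : Type*} {l : Filter ι} {x y z α : ι → ℝ}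
    (hy : ∀ i, 0 < y i) (hz : ∀ i, 0 < z i)
    (hcos : ∀ i, cos (α i) = (-cosh (x i) + cosh (y i) * cosh (z i)) / (sinh (y i) * sinh (z i)))
    (hratio : Tendsto (fun i => sinh (x i / 2) / (sinh (y i / 2) * sinh (z i / 2))) l (𝓝 0)) :
    Tendsto (fun i => cos (α i)) l (𝓝 1) := by
  have hlower : Tendsto (fun i => 1 - (sinh (x i / 2) / (sinh (y i / 2) * sinh (z i / 2))) ^ 2 / 2)
      l (𝓝 1) := by
    simpa using ((hratio.pow 2).div_const 2).const_sub 1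
  refine tendsto_of_tendsto_of_tendsto_of_le_of_le hlower tendsto_const_nhds (fun i => ?_)
    fun i => cos_le_one _
  exact (hcos i).symm ▸ one_sub_sq_div_two_le_hyperbolic_cos (hy i) (hz i)

lemma tendsto_nhds_zero_of_tendsto_cos {ι : Type*} {l : Filter ι} {α : ι → ℝ}
    (hα : ∀ i, α i ∈ Set.Icc 0 π) (hcos : Tendsto (fun i => cos (α i)) l (𝓝 1)) :
    Tendsto α l (𝓝 0) := by
  have := (continuous_arccos.tendsto 1).comp hcos
  rw [Function.comp_def, arccos_one] at this
  exact this.congr fun i => arccos_cos (hα i).1 (hα i).2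

theorem stmt_17_general (a1 a2 a3 : ℝ)
    (l1 l2 l3 u1 u2 u3 α1 α2 α3 : ℕ → ℝ)
    (hl1 : ∀ m, 0 < l1 m) (hl2 : ∀ m, 0 < l2 m) (hl3 : ∀ m, 0 < l3 m)
    (h1 : ∀ m, Real.sinh (l1 m / 2) = Real.sinh (a1 / 2) * Real.exp (u2 m + u3 m))
    (h2 : ∀ m, Real.sinh (l2 m / 2) = Real.sinh (a2 / 2) * Real.exp (u1 m + u3 m))
    (h3 : ∀ m, Real.sinh (l3 m / 2) = Real.sinh (a3 / 2) * Real.exp (u1 m + u2 m))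
    (hu1 : Tendsto u1 atTop atTop) (hu2 : Tendsto u2 atTop atTop)
    (hu3 : Tendsto u3 atTop atTop)
    (hα1 : ∀ m, α1 m ∈ Set.Ioo 0 π) (hα2 : ∀ m, α2 m ∈ Set.Ioo 0 π)
    (hα3 : ∀ m, α3 m ∈ Set.Ioo 0 π)
    (hc1 : ∀ m, Real.cos (α1 m) =
        (-Real.cosh (l1 m) + Real.cosh (l2 m) * Real.cosh (l3 m)) /
          (Real.sinh (l2 m) * Real.sinh (l3 m)))
    (hc2 : ∀ m, Real.cos (α2 m) =
        (-Real.cosh (l2 m) + Real.cosh (l3 m) * Real.cosh (l1 m)) /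
          (Real.sinh (l3 m) * Real.sinh (l1 m)))
    (hc3 : ∀ m, Real.cos (α3 m) =
        (-Real.cosh (l3 m) + Real.cosh (l1 m) * Real.cosh (l2 m)) /
          (Real.sinh (l1 m) * Real.sinh (l2 m))) :
    (Tendsto (fun m => Real.cos (α1 m)) atTop (𝓝 1) ∧
      Tendsto (fun m => Real.cos (α2 m)) atTop (𝓝 1) ∧
      Tendsto (fun m => Real.cos (α3 m)) atTop (𝓝 1)) ∧
    (Tendsto α1 atTop (𝓝 0) ∧ Tendsto α2 atTop (𝓝 0) ∧ Tendsto α3 atTop (𝓝 0)) := by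
  have hcos1 := tendsto_cos_nhds_one_of_hyperbolic_cos hl2 hl3 hc1 <|
    tendsto_div_mul_of_eq_mul_exp _ _ _ h1 h2 h3 <|
      (hu1.const_mul_atTop two_pos).congr fun m => by ring
  have hcos2 := tendsto_cos_nhds_one_of_hyperbolic_cos hl3 hl1 hc2 <|
    tendsto_div_mul_of_eq_mul_exp _ _ _ h2 h3 h1 <|
      (hu2.const_mul_atTop two_pos).congr fun m => by ring
  have hcos3 := tendsto_cos_nhds_one_of_hyperbolic_cos hl1 hl2 hc3 <|
    tendsto_div_mul_of_eq_mul_exp _ _ _ h3 h1 h2 <|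
      (hu3.const_mul_atTop two_pos).congr fun m => by ring
  exact ⟨⟨hcos1, hcos2, hcos3⟩,
    tendsto_nhds_zero_of_tendsto_cos (fun m => Set.Ioo_subset_Icc_self (hα1 m)) hcos1,
    tendsto_nhds_zero_of_tendsto_cos (fun m => Set.Ioo_subset_Icc_self (hα2 m)) hcos2,
    tendsto_nhds_zero_of_tendsto_cos (fun m => Set.Ioo_subset_Icc_self (hα3 m)) hcos3⟩

theorem stmt_17 (a1 a2 a3 : ℝ) (ha1 : 0 < a1) (ha2 : 0 < a2) (ha3 : 0 < a3)
    (l1 l2 l3 u1 u2 u3 α1 α2 α3 : ℕ → ℝ)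
    (hl1 : ∀ m, 0 < l1 m) (hl2 : ∀ m, 0 < l2 m) (hl3 : ∀ m, 0 < l3 m)
    (h1 : ∀ m, Real.sinh (l1 m / 2) = Real.sinh (a1 / 2) * Real.exp (u2 m + u3 m))
    (h2 : ∀ m, Real.sinh (l2 m / 2) = Real.sinh (a2 / 2) * Real.exp (u1 m + u3 m))
    (h3 : ∀ m, Real.sinh (l3 m / 2) = Real.sinh (a3 / 2) * Real.exp (u1 m + u2 m))
    (hu1 : Tendsto u1 atTop atTop) (hu2 : Tendsto u2 atTop atTop)
    (hu3 : Tendsto u3 atTop atTop)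
    (hα1 : ∀ m, α1 m ∈ Set.Ioo 0 π) (hα2 : ∀ m, α2 m ∈ Set.Ioo 0 π)
    (hα3 : ∀ m, α3 m ∈ Set.Ioo 0 π)
    (hc1 : ∀ m, Real.cos (α1 m) =
        (-Real.cosh (l1 m) + Real.cosh (l2 m) * Real.cosh (l3 m)) /
          (Real.sinh (l2 m) * Real.sinh (l3 m)))
    (hc2 : ∀ m, Real.cos (α2 m) =
        (-Real.cosh (l2 m) + Real.cosh (l3 m) * Real.cosh (l1 m)) /
          (Real.sinh (l3 m) * Real.sinh (l1 m)))
    (hc3 : ∀ m, Real.cos (α3 m) =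
        (-Real.cosh (l3 m) + Real.cosh (l1 m) * Real.cosh (l2 m)) /
          (Real.sinh (l1 m) * Real.sinh (l2 m))) :
    (Tendsto (fun m => Real.cos (α1 m)) atTop (𝓝 1) ∧
      Tendsto (fun m => Real.cos (α2 m)) atTop (𝓝 1) ∧
      Tendsto (fun m => Real.cos (α3 m)) atTop (𝓝 1)) ∧
    (Tendsto α1 atTop (𝓝 0) ∧ Tendsto α2 atTop (𝓝 0) ∧ Tendsto α3 atTop (𝓝 0)) :=
  stmt_17_general a1 a2 a3 l1 l2 l3 u1 u2 u3 α1 α2 α3 hl1 hl2 hl3 h1 h2 h3 hu1 hu2 hu3 hα1 hα2 hα3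
    hc1 hc2 hc3
end

section
/- Let x0, x1, x2, x3, x4 > 0 be the edge lengths of two hyperbolic triangles t (sides x0, x1, x2) and t' (sides x0, x3, x4) glued along the edge of length x0, with angles α opposite x0 in t, β, γ adjacent to x0 in t, and α' opposite x0 in t', β', γ' adjacent to x0 in t'. Then the Delaunay angle condition α + α' ≤ β + β' + γ + γ' holds if and only if (s(x1)²+s(x2)²−s(x0)²)/(s(x1)s(x2)) + (s(x3)²+s(x4)²−s(x0)²)/(s(x3)s(x4)) ≥ 0, where s(t) = sinh(t/2). -/
/-!
Write `a = (β + γ - α) / 2`. Halving the cosine law expresses `sinh² (xᵢ / 2)` and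
`cosh² (x₀ / 2)` as products of cosines of half-angle combinations; together with the identity
`cos q sin (p + r) + cos r sin (p + q) - cos p sin (q + r) = 2 sin p cos q cos r` this gives
`(s(x₁)² + s(x₂)² - s(x₀)²) / (s(x₁) s(x₂)) = 2 sin a cosh (x₀ / 2)`.
Summing over both triangles, the Delaunay quantity is `2 cosh (x₀ / 2) (sin a + sin a')` with
`a, a' ∈ (-π/2, π/2)`, and since `sin` is increasing there, it is nonnegative iff `a + a' ≥ 0`,
which is the angle condition.
-/

open Real Set

namespace Real

theorem sinh_half_sq (x : ℝ) : sinh (x / 2) ^ 2 = (cosh x - 1) / 2 := by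
  rw [show cosh x = cosh (2 * (x / 2)) by ring_nf, cosh_two_mul, cosh_sq]
  ring

theorem cosh_half_sq (x : ℝ) : cosh (x / 2) ^ 2 = (cosh x + 1) / 2 := by
  rw [show cosh x = cosh (2 * (x / 2)) by ring_nf, cosh_two_mul, cosh_sq]
  ring

theorem cos_mul_sin_add_cos_mul_sin_sub_cos_mul_sin (p q r : ℝ) :
    cos q * sin (p + r) + cos r * sin (p + q) - cos p * sin (q + r) = 2 * sin p * cos r * cos q := by
  simp only [sin_add]
  ring

theorem sin_add_sin_nonneg_iff {a b : ℝ} (ha : a ∈ Icc (-(π / 2)) (π / 2))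
    (hb : b ∈ Icc (-(π / 2)) (π / 2)) : 0 ≤ sin a + sin b ↔ 0 ≤ a + b := by
  have hb' : -b ∈ Icc (-(π / 2)) (π / 2) := ⟨by linarith [hb.2], by linarith [hb.1]⟩
  rw [← neg_le_iff_add_nonneg, ← neg_le_iff_add_nonneg, ← sin_neg]
  exact strictMonoOn_sin.le_iff_le hb' ha

end Real

section HyperbolicTriangle

variable {x x0 x1 x2 α β γ : ℝ}

theorem sinh_half_sq_of_cosh_eq (hd : sin β * sin γ ≠ 0)
    (h : cosh x = (cos α + cos β * cos γ) / (sin β * sin γ)) :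
    sinh (x / 2) ^ 2 = cos ((α + β + γ) / 2) * cos ((β + γ - α) / 2) / (sin β * sin γ) := by
  have key : cos α + cos (β + γ) = 2 * cos ((α + β + γ) / 2) * cos ((β + γ - α) / 2) := by
    rw [cos_add_cos, ← cos_neg ((α - (β + γ)) / 2)]
    ring_nf
  rw [cos_add] at key
  rw [sinh_half_sq, h]
  obtain ⟨hβ, hγ⟩ := mul_ne_zero_iff.1 hd
  field_simp
  linear_combination key

theorem cosh_half_sq_of_cosh_eq (hd : sin β * sin γ ≠ 0)
    (h : cosh x = (cos α + cos β * cos γ) / (sin β * sin γ)) :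
    cosh (x / 2) ^ 2 = cos ((α + β - γ) / 2) * cos ((α + γ - β) / 2) / (sin β * sin γ) := by
  have key : cos α + cos (β - γ) = 2 * cos ((α + β - γ) / 2) * cos ((α + γ - β) / 2) := by
    rw [cos_add_cos]
    ring_nf
  rw [cos_sub] at key
  rw [cosh_half_sq, h]
  obtain ⟨hβ, hγ⟩ := mul_ne_zero_iff.1 hd
  field_simp
  linear_combination key

theorem sinh_half_sq_add_sq_sub_sq_div_eq (h1 : 0 < x1) (h2 : 0 < x2)
    (hα : α ∈ Ioo 0 π) (hβ : β ∈ Ioo 0 π) (hγ : γ ∈ Ioo 0 π) (hsum : α + β + γ < π)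
    (ht0 : cosh x0 = (cos α + cos β * cos γ) / (sin β * sin γ))
    (ht1 : cosh x1 = (cos β + cos α * cos γ) / (sin α * sin γ))
    (ht2 : cosh x2 = (cos γ + cos α * cos β) / (sin α * sin β)) :
    (sinh (x1 / 2) ^ 2 + sinh (x2 / 2) ^ 2 - sinh (x0 / 2) ^ 2) / (sinh (x1 / 2) * sinh (x2 / 2))
      = 2 * sin ((β + γ - α) / 2) * cosh (x0 / 2) := by
  obtain ⟨hα0, -⟩ := hα
  obtain ⟨hβ0, -⟩ := hβ
  obtain ⟨hγ0, -⟩ := hγ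
  have hsα := sin_pos_of_pos_of_lt_pi hα0 (by linarith)
  have hsβ := sin_pos_of_pos_of_lt_pi hβ0 (by linarith)
  have hsγ := sin_pos_of_pos_of_lt_pi hγ0 (by linarith)
  have hσ : 0 < cos ((α + β + γ) / 2) := cos_pos_of_mem_Ioo ⟨by linarith, by linarith⟩
  have hq : 0 < cos ((α + γ - β) / 2) := cos_pos_of_mem_Ioo ⟨by linarith, by linarith⟩
  have hr : 0 < cos ((α + β - γ) / 2) := cos_pos_of_mem_Ioo ⟨by linarith, by linarith⟩
  have hs1 : 0 < sinh (x1 / 2) := sinh_pos_iff.2 (by linarith)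
  have hs2 : 0 < sinh (x2 / 2) := sinh_pos_iff.2 (by linarith)
  have e0 := sinh_half_sq_of_cosh_eq (by positivity) ht0
  have e1 := sinh_half_sq_of_cosh_eq (by positivity) ht1
  have e2 := sinh_half_sq_of_cosh_eq (by positivity) ht2
  have eh := cosh_half_sq_of_cosh_eq (by positivity) ht0
  rw [add_comm β α] at e1
  rw [show γ + α + β = α + β + γ by ring] at e2
  have hprod : sinh (x1 / 2) * sinh (x2 / 2) = cos ((α + β + γ) / 2) / sin α * cosh (x0 / 2) := by
    refine (pow_left_inj₀ (by positivity) (by positivity) two_ne_zero).1 ?_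
    rw [mul_pow, mul_pow, e1, e2, eh]
    field_simp
  have hcore := cos_mul_sin_add_cos_mul_sin_sub_cos_mul_sin
    ((β + γ - α) / 2) ((α + γ - β) / 2) ((α + β - γ) / 2)
  rw [show (β + γ - α) / 2 + (α + β - γ) / 2 = β by ring,
    show (β + γ - α) / 2 + (α + γ - β) / 2 = γ by ring,
    show (α + γ - β) / 2 + (α + β - γ) / 2 = α by ring] at hcore
  have hnum : sinh (x1 / 2) ^ 2 + sinh (x2 / 2) ^ 2 - sinh (x0 / 2) ^ 2
      = 2 * sin ((β + γ - α) / 2) * (cos ((α + β + γ) / 2) / sin α) * cosh (x0 / 2) ^ 2 := by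
    rw [e0, e1, e2, eh]
    field_simp
    linear_combination hcore
  rw [hnum, hprod]
  field_simp

end HyperbolicTriangle

theorem stmt_19_general (x0 x1 x2 x3 x4 α β γ α' β' γ' : ℝ)
    (h1 : 0 < x1) (h2 : 0 < x2) (h3 : 0 < x3) (h4 : 0 < x4)
    (hα : α ∈ Set.Ioo 0 π) (hβ : β ∈ Set.Ioo 0 π) (hγ : γ ∈ Set.Ioo 0 π)
    (hα' : α' ∈ Set.Ioo 0 π) (hβ' : β' ∈ Set.Ioo 0 π) (hγ' : γ' ∈ Set.Ioo 0 π)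
    (hsum : α + β + γ < π) (hsum' : α' + β' + γ' < π)
    -- triangle t with sides x0 (opposite α), x1 (opposite β), x2 (opposite γ)
    (ht0 : Real.cosh x0 = (Real.cos α + Real.cos β * Real.cos γ) /
        (Real.sin β * Real.sin γ))
    (ht1 : Real.cosh x1 = (Real.cos β + Real.cos α * Real.cos γ) /
        (Real.sin α * Real.sin γ))
    (ht2 : Real.cosh x2 = (Real.cos γ + Real.cos α * Real.cos β) /
        (Real.sin α * Real.sin β))
    -- triangle t' with sides x0 (opposite α'), x3 (opposite β'), x4 (opposite γ')
    (ht0' : Real.cosh x0 = (Real.cos α' + Real.cos β' * Real.cos γ') /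
        (Real.sin β' * Real.sin γ'))
    (ht3 : Real.cosh x3 = (Real.cos β' + Real.cos α' * Real.cos γ') /
        (Real.sin α' * Real.sin γ'))
    (ht4 : Real.cosh x4 = (Real.cos γ' + Real.cos α' * Real.cos β') /
        (Real.sin α' * Real.sin β')) :
    α + α' ≤ β + β' + γ + γ' ↔
      (Real.sinh (x1 / 2) ^ 2 + Real.sinh (x2 / 2) ^ 2 - Real.sinh (x0 / 2) ^ 2) /
          (Real.sinh (x1 / 2) * Real.sinh (x2 / 2)) +
        (Real.sinh (x3 / 2) ^ 2 + Real.sinh (x4 / 2) ^ 2 - Real.sinh (x0 / 2) ^ 2) /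
          (Real.sinh (x3 / 2) * Real.sinh (x4 / 2)) ≥ 0 := by
  rw [sinh_half_sq_add_sq_sub_sq_div_eq h1 h2 hα hβ hγ hsum ht0 ht1 ht2,
    sinh_half_sq_add_sq_sub_sq_div_eq h3 h4 hα' hβ' hγ' hsum' ht0' ht3 ht4,
    show ∀ a b c : ℝ, 2 * a * c + 2 * b * c = 2 * c * (a + b) by intros; ring,
    ge_iff_le, mul_nonneg_iff_of_pos_left (by positivity),
    sin_add_sin_nonneg_iff ⟨by linarith [hα.2, hβ.1, hγ.1], by linarith [hα.1, hβ.2, hγ.2]⟩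
      ⟨by linarith [hα'.2, hβ'.1, hγ'.1], by linarith [hα'.1, hβ'.2, hγ'.2]⟩]
  constructor <;> intro h <;> linarith

theorem stmt_19 (x0 x1 x2 x3 x4 α β γ α' β' γ' : ℝ)
    (h0 : 0 < x0) (h1 : 0 < x1) (h2 : 0 < x2) (h3 : 0 < x3) (h4 : 0 < x4)
    (hα : α ∈ Set.Ioo 0 π) (hβ : β ∈ Set.Ioo 0 π) (hγ : γ ∈ Set.Ioo 0 π)
    (hα' : α' ∈ Set.Ioo 0 π) (hβ' : β' ∈ Set.Ioo 0 π) (hγ' : γ' ∈ Set.Ioo 0 π)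
    (hsum : α + β + γ < π) (hsum' : α' + β' + γ' < π)
    -- triangle t with sides x0 (opposite α), x1 (opposite β), x2 (opposite γ)
    (ht0 : Real.cosh x0 = (Real.cos α + Real.cos β * Real.cos γ) /
        (Real.sin β * Real.sin γ))
    (ht1 : Real.cosh x1 = (Real.cos β + Real.cos α * Real.cos γ) /
        (Real.sin α * Real.sin γ))
    (ht2 : Real.cosh x2 = (Real.cos γ + Real.cos α * Real.cos β) /
        (Real.sin α * Real.sin β))
    -- triangle t' with sides x0 (opposite α'), x3 (opposite β'), x4 (opposite γ')
    (ht0' : Real.cosh x0 = (Real.cos α' + Real.cos β' * Real.cos γ') /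
        (Real.sin β' * Real.sin γ'))
    (ht3 : Real.cosh x3 = (Real.cos β' + Real.cos α' * Real.cos γ') /
        (Real.sin α' * Real.sin γ'))
    (ht4 : Real.cosh x4 = (Real.cos γ' + Real.cos α' * Real.cos β') /
        (Real.sin α' * Real.sin β')) :
    α + α' ≤ β + β' + γ + γ' ↔
      (Real.sinh (x1 / 2) ^ 2 + Real.sinh (x2 / 2) ^ 2 - Real.sinh (x0 / 2) ^ 2) /
          (Real.sinh (x1 / 2) * Real.sinh (x2 / 2)) +
        (Real.sinh (x3 / 2) ^ 2 + Real.sinh (x4 / 2) ^ 2 - Real.sinh (x0 / 2) ^ 2) /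
          (Real.sinh (x3 / 2) * Real.sinh (x4 / 2)) ≥ 0 :=
  stmt_19_general x0 x1 x2 x3 x4 α β γ α' β' γ' h1 h2 h3 h4 hα hβ hγ hα' hβ' hγ' hsum hsum' ht0 ht1
    ht2 ht0' ht3 ht4
end
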